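/- Under Assumptions A1 and A2, if in addition range(T) = Λ (the trace operator is surjective), then range((I − X) T) is closed, and consequently ker(R^⊤) = { T^⊤ τ : τ ∈ Λ*, (I + X^⊤) τ = 0 } (without closure). -/

import Mathlib

/-!
Write `S = (I - X) T`. As `X² = I`, the map `I - X` sends `Λ` onto the `(-1)`-eigenspace
`ker (I + X)` (there `y = (I - X) (y / 2)`), so for surjective `T` the range of `S` is
`ker (I + X)`, which is closed. By A2, `ker Rᵀ` is the annihilator of `ker S`. A functional that
vanishes on the kernel of an operator with closed range factors through that operator (open mapping
theorem on the range, then Hahn–Banach), hence `ker Rᵀ = range Sᵀ = Tᵀ (range (I - X)ᵀ)`, and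
`range (I - X)ᵀ` consists of the `τ` with `τ + τ X = 0` (such a `τ` is `(I - X)ᵀ (τ / 2)`).
-/

/-- The transpose (dual map) `B^⊤ : Y* → X*` of a bounded linear operator `B : X → Y`. -/
noncomputable def trOp {X Y : Type*} [NormedAddCommGroup X] [NormedSpace ℂ X]
    [NormedAddCommGroup Y] [NormedSpace ℂ Y] (B : X →L[ℂ] Y) :
    (Y →L[ℂ] ℂ) →L[ℂ] (X →L[ℂ] ℂ) :=
  (ContinuousLinearMap.compL ℂ X Y ℂ).flip B

theorem LinearMap.range_id_sub_eq_ker_id_add {R M : Type*} [Ring R] [Invertible (2 : R)]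
    [AddCommGroup M] [Module R M] {X : M →ₗ[R] M} (hX : X ∘ₗ X = LinearMap.id) :
    LinearMap.range (LinearMap.id - X) = LinearMap.ker (LinearMap.id + X) := by
  have hXX (x : M) : X (X x) = x := congr($hX x)
  apply le_antisymm
  · rintro _ ⟨x, rfl⟩
    simp [hXX]
  · intro y (hy : y + X y = 0)
    refine ⟨(⅟2 : R) • y, ?_⟩
    have : X y = -y := eq_neg_of_add_eq_zero_right hy
    simp [this, ← two_smul R y, smul_smul]

open ContinuousLinearMap

namespace ContinuousLinearMap

section

variable {𝕜 E F : Type*} [NontriviallyNormedField 𝕜]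
  [NormedAddCommGroup E] [NormedSpace 𝕜 E] [CompleteSpace E]
  [NormedAddCommGroup F] [NormedSpace 𝕜 F] [CompleteSpace F]

theorem exists_norm_le_mul_norm_of_ker_le {G : Type*} [SeminormedAddCommGroup G]
    [NormedSpace 𝕜 G]
    (S : E →L[𝕜] F) (hS : IsClosed (Set.range S)) (f : E →L[𝕜] G)
    (hf : LinearMap.ker (S : E →ₗ[𝕜] F) ≤ LinearMap.ker (f : E →ₗ[𝕜] G)) :
    ∃ C, ∀ x, ‖f x‖ ≤ C * ‖S x‖ := by
  have : IsClosed (LinearMap.range (S : E →ₗ[𝕜] F) : Set F) := by rwa [LinearMap.coe_range]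
  have : CompleteSpace (LinearMap.range (S : E →ₗ[𝕜] F)) := this.completeSpace_coe
  obtain ⟨C, -, hC⟩ := S.rangeRestrict.exists_preimage_norm_le
    (LinearMap.surjective_rangeRestrict (S : E →ₗ[𝕜] F))
  refine ⟨‖f‖ * C, fun x => ?_⟩
  obtain ⟨x', hx', hx'_le⟩ := hC (S.rangeRestrict x)
  have hfx : f x = f x' := by
    have : x - x' ∈ LinearMap.ker (S : E →ₗ[𝕜] F) := by
      simpa [sub_eq_zero] using (congrArg Subtype.val hx').symm
    simpa [sub_eq_zero] using hf this
  calc ‖f x‖ = ‖f x'‖ := by rw [hfx]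
    _ ≤ ‖f‖ * ‖x'‖ := f.le_opNorm x'
    _ ≤ ‖f‖ * (C * ‖S x‖) := by gcongr; exact hx'_le
    _ = ‖f‖ * C * ‖S x‖ := by ring

end

theorem exists_comp_eq_of_ker_le {𝕜 E F : Type*} [RCLike 𝕜]
    [NormedAddCommGroup E] [NormedSpace 𝕜 E] [CompleteSpace E]
    [NormedAddCommGroup F] [NormedSpace 𝕜 F] [CompleteSpace F]
    (S : E →L[𝕜] F) (hS : IsClosed (Set.range S)) (f : StrongDual 𝕜 E)
    (hf : LinearMap.ker (S : E →ₗ[𝕜] F) ≤ LinearMap.ker (f : E →ₗ[𝕜] 𝕜)) :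
    ∃ g : StrongDual 𝕜 F, g ∘L S = f := by
  obtain ⟨g, hg, -⟩ := exists_extension_norm_eq _
    ((f : E →ₗ[𝕜] 𝕜).compLeftInverse (S : E →ₗ[𝕜] F))
  refine ⟨g, ext fun x => ?_⟩
  exact (hg ⟨S x, x, rfl⟩).trans (LinearMap.compLeftInverse_apply_of_bdd _ _
    (S.exists_norm_le_mul_norm_of_ker_le hS f hf) x _ rfl)

end ContinuousLinearMap

section Transpose

variable {E F G : Type*} [NormedAddCommGroup E] [NormedSpace ℂ E]
  [NormedAddCommGroup F] [NormedSpace ℂ F] [NormedAddCommGroup G] [NormedSpace ℂ G]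

@[simp]
theorem trOp_apply (B : E →L[ℂ] F) (f : StrongDual ℂ F) (x : E) : trOp B f x = f (B x) := rfl

theorem trOp_comp (A : F →L[ℂ] G) (B : E →L[ℂ] F) : trOp (A ∘L B) = trOp B ∘L trOp A := rfl

theorem trOp_eq_zero_iff (B : E →L[ℂ] F) (f : StrongDual ℂ F) :
    trOp B f = 0 ↔ LinearMap.range (B : E →ₗ[ℂ] F) ≤ LinearMap.ker (f : F →ₗ[ℂ] ℂ) := by
  simp [LinearMap.range_le_iff_comap, ContinuousLinearMap.ext_iff, Submodule.eq_top_iff']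

theorem range_trOp_of_isClosed_range [CompleteSpace E] [CompleteSpace F] (S : E →L[ℂ] F)
    (hS : IsClosed (Set.range S)) :
    Set.range (trOp S) =
      {f : StrongDual ℂ E | LinearMap.ker (S : E →ₗ[ℂ] F) ≤ LinearMap.ker (f : E →ₗ[ℂ] ℂ)} := by
  ext f
  refine ⟨?_, fun hf => S.exists_comp_eq_of_ker_le hS f hf⟩
  rintro ⟨g, rfl⟩ x (hx : S x = 0)
  simp [hx]

theorem setOf_add_trOp_eq_zero_eq_range {X : E →L[ℂ] E} (hX : X ∘L X = .id ℂ E) :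
    {τ : StrongDual ℂ E | τ + trOp X τ = 0} = Set.range (trOp (.id ℂ E - X)) := by
  have hXX (x : E) : X (X x) = x := congr($hX x)
  ext τ
  constructor
  · intro hτ
    refine ⟨(2⁻¹ : ℂ) • τ, ext fun x => ?_⟩
    have : τ x + τ (X x) = 0 := congr($hτ x)
    simp only [map_smul, smul_apply, trOp_apply, sub_apply, id_apply, map_sub, smul_eq_mul]
    linear_combination (-2⁻¹ : ℂ) * this
  · rintro ⟨g, rfl⟩
    ext x
    simp [hXX]

end Transpose

theorem statement4
    {Uhat U Lam : Type*}
    [NormedAddCommGroup Uhat] [InnerProductSpace ℂ Uhat]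
    [NormedAddCommGroup U] [InnerProductSpace ℂ U] [CompleteSpace U]
    [NormedAddCommGroup Lam] [InnerProductSpace ℂ Lam] [CompleteSpace Lam]
    (R : Uhat →L[ℂ] U) (T : U →L[ℂ] Lam) (X : Lam →L[ℂ] Lam)
    -- Assumption A2
    (hX2 : X.comp X = ContinuousLinearMap.id ℂ Lam)
    (hA2 : LinearMap.range (R : Uhat →ₗ[ℂ] U) =
      LinearMap.ker (((ContinuousLinearMap.id ℂ Lam - X).comp T : U →L[ℂ] Lam) : U →ₗ[ℂ] Lam))
    -- surjectivity of the trace operator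
    (hTsurj : LinearMap.range (T : U →ₗ[ℂ] Lam) = ⊤) :
    IsClosed (Set.range fun u : U => T u - X (T u)) ∧
    ((LinearMap.ker (trOp R : (U →L[ℂ] ℂ) →ₗ[ℂ] (Uhat →L[ℂ] ℂ)) : Submodule ℂ (U →L[ℂ] ℂ)) :
      Set (U →L[ℂ] ℂ)) =
      ⇑(trOp T) '' {τ : Lam →L[ℂ] ℂ | τ + trOp X τ = 0} := by
  set S := (ContinuousLinearMap.id ℂ Lam - X).comp T
  have hrange : LinearMap.range (S : U →ₗ[ℂ] Lam) =
      LinearMap.ker ((ContinuousLinearMap.id ℂ Lam + X : Lam →L[ℂ] Lam) : Lam →ₗ[ℂ] Lam) := by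
    rw [toLinearMap_comp, LinearMap.range_comp_of_range_eq_top _ hTsurj, toLinearMap_sub,
      toLinearMap_add, coe_id]
    exact LinearMap.range_id_sub_eq_ker_id_add congr(($hX2 : Lam →ₗ[ℂ] Lam))
  have hS_closed : IsClosed (Set.range S) := by
    rw [← coe_coe, ← LinearMap.coe_range, hrange]
    exact isClosed_ker _
  refine ⟨hS_closed, ?_⟩
  calc ((LinearMap.ker (trOp R : (U →L[ℂ] ℂ) →ₗ[ℂ] (Uhat →L[ℂ] ℂ)) : Submodule ℂ (U →L[ℂ] ℂ)) :
        Set (U →L[ℂ] ℂ))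
      = {f : U →L[ℂ] ℂ | LinearMap.ker (S : U →ₗ[ℂ] Lam) ≤ LinearMap.ker (f : U →ₗ[ℂ] ℂ)} := by
        ext f
        rw [SetLike.mem_coe, LinearMap.mem_ker, coe_coe, trOp_eq_zero_iff, hA2, Set.mem_ofPred_eq]
    _ = Set.range (trOp T ∘ trOp (.id ℂ Lam - X)) := by
        rw [← range_trOp_of_isClosed_range S hS_closed, trOp_comp, coe_comp]
    _ = ⇑(trOp T) '' {τ : Lam →L[ℂ] ℂ | τ + trOp X τ = 0} := by
        rw [Set.range_comp, setOf_add_trOp_eq_zero_eq_range hX2]
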